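/- arXiv:0805.2092 — 2 statements merged into one kernel-verified Lean document; each statement's English description precedes it below -/
import Mathlib

section
/- If α is an odd norm-perfect Gaussian integer, then α = π^k · γ² for some Gaussian prime π, odd positive integer k, and Gaussian integer γ with gcd(π, γ) = 1 (i.e., π does not divide γ). -/
/-!
Put `σᵢ = 1 + πᵢ + ⋯ + πᵢ ^ kᵢ`. The prime `1 + i = ⟨1, 1⟩` has residue field `𝔽₂` and `(1 + i) ∣ x` iff
`2 ∣ N(x)`. An odd prime `π` is therefore `≡ 1 mod (1 + i)`, so `σᵢ ≡ kᵢ + 1` and `N(σᵢ)` is even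
exactly when `kᵢ` is odd. Since `∏ N(σᵢ) = 2 N(α)` with `N(α)` odd, exactly one `kᵢ` is odd. The
other prime powers form a square `γ ^ 2`, and the unit `ε` is absorbed into the odd power `π ^ k`:
`ε ^ 4 = 1` and `k ^ 2 ≡ 1 mod 8` give `ε = (ε ^ k) ^ k`.
-/

open Finset

namespace GaussianInt

theorem one_one_dvd_iff_even (x : GaussianInt) :
    (⟨1, 1⟩ : GaussianInt) ∣ x ↔ Even (x.re + x.im) := by
  constructor
  · rintro ⟨y, rfl⟩
    exact ⟨y.re, by simp [Zsqrtd.re_mul, Zsqrtd.im_mul]⟩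
  · rintro ⟨c, hc⟩
    refine ⟨⟨c, c - x.re⟩, ?_⟩
    ext
    · simp [Zsqrtd.re_mul]
    · simp [Zsqrtd.im_mul]; omega

theorem two_dvd_norm_iff_even (x : GaussianInt) : 2 ∣ x.norm ↔ Even (x.re + x.im) := by
  rw [Zsqrtd.norm_def, ← even_iff_two_dvd]
  simp only [Int.even_sub, Int.even_add, Int.even_mul]
  tauto

theorem one_one_dvd_iff_two_dvd_norm (x : GaussianInt) :
    (⟨1, 1⟩ : GaussianInt) ∣ x ↔ 2 ∣ x.norm := by
  rw [one_one_dvd_iff_even, two_dvd_norm_iff_even]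

theorem one_one_dvd_natCast_iff (n : ℕ) : (⟨1, 1⟩ : GaussianInt) ∣ (n : GaussianInt) ↔ Even n := by
  simp [one_one_dvd_iff_even]

theorem one_one_dvd_sub_one {x : GaussianInt} (hx : ¬ (⟨1, 1⟩ : GaussianInt) ∣ x) :
    (⟨1, 1⟩ : GaussianInt) ∣ x - 1 := by
  rw [one_one_dvd_iff_even] at hx ⊢
  simp only [Zsqrtd.re_sub, Zsqrtd.im_sub, Zsqrtd.re_one, Zsqrtd.im_one, Int.not_even_iff_odd] at *
  grind

theorem one_one_dvd_geom_sum_iff {x : GaussianInt} (hx : ¬ (⟨1, 1⟩ : GaussianInt) ∣ x) (n : ℕ) :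
    (⟨1, 1⟩ : GaussianInt) ∣ ∑ j ∈ range n, x ^ j ↔ Even n := by
  simpa [one_one_dvd_natCast_iff] using
    dvd_geom_sum₂_iff_of_dvd_sub (n := n) (one_one_dvd_sub_one hx)

theorem two_dvd_norm_geom_sum_iff {x : GaussianInt} {k : ℕ}
    (hx : ¬ (⟨1, 1⟩ : GaussianInt) ∣ x ^ k) :
    2 ∣ (∑ j ∈ range (k + 1), x ^ j).norm ↔ Odd k := by
  rcases Nat.eq_zero_or_pos k with rfl | hk
  · simp
  · rw [← one_one_dvd_iff_two_dvd_norm, one_one_dvd_geom_sum_iff (fun h => hx (h.pow hk.ne')),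
      Nat.even_add_one, Nat.not_even_iff_odd]

theorem pow_four_eq_one_of_isUnit {u : GaussianInt} (hu : IsUnit u) : u ^ 4 = 1 := by
  obtain ⟨a, b⟩ := u
  have hnorm : a * a + b * b = 1 := by
    simpa [Zsqrtd.norm_def] using (Zsqrtd.norm_eq_one_iff' (by norm_num) _).mpr hu
  have ha₁ : -1 ≤ a := by nlinarith
  have ha₂ : a ≤ 1 := by nlinarith
  have hb₁ : -1 ≤ b := by nlinarith
  have hb₂ : b ≤ 1 := by nlinarith
  interval_cases a <;> interval_cases b <;> simp_all <;> decide

end GaussianInt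

theorem pow_pow_self_of_odd {M : Type*} [Monoid M] {x : M} (hx : x ^ 8 = 1) {m : ℕ} (hm : Odd m) :
    (x ^ m) ^ m = x := by
  have hsq : m * m % 8 = 1 := by
    rw [Nat.mul_mod]
    have : m % 8 < 8 := Nat.mod_lt _ (by norm_num)
    have : m % 2 = 1 := Nat.odd_iff.mp hm
    interval_cases h : m % 8 <;> omega
  rw [← pow_mul, pow_eq_pow_mod _ hx, hsq, pow_one]

theorem Prime.exists_dvd_forall_dvd_eq_of_not_sq_dvd_prod {ι M : Type*} [CommMonoidWithZero M]
    {p : M} (hp : Prime p) {s : Finset ι} {f : ι → M} (hdvd : p ∣ ∏ i ∈ s, f i)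
    (hsq : ¬ p ^ 2 ∣ ∏ i ∈ s, f i) : ∃ i ∈ s, p ∣ f i ∧ ∀ j ∈ s, p ∣ f j → j = i := by
  classical
  obtain ⟨i, hi, hpi⟩ := (hp.dvd_finsetProd_iff f).mp hdvd
  refine ⟨i, hi, hpi, fun j hj hpj => by_contra fun hji => hsq ?_⟩
  calc p ^ 2 = p * p := sq p
    _ ∣ ∏ l ∈ {i, j}, f l := by rw [prod_pair (Ne.symm hji)]; exact mul_dvd_mul hpi hpj
    _ ∣ ∏ l ∈ s, f l :=
      prod_dvd_prod_of_subset _ _ _ (insert_subset hi (singleton_subset_iff.mpr hj))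

theorem Finset.prod_pow_eq_pow_mul_sq {ι M : Type*} [CommMonoid M] [DecidableEq ι] {s : Finset ι}
    {f : ι → M} {k : ι → ℕ} {i : ι} (hi : i ∈ s) (heven : ∀ j ∈ s, j ≠ i → Even (k j)) :
    ∏ j ∈ s, f j ^ k j = f i ^ k i * (∏ j ∈ s.erase i, f j ^ (k j / 2)) ^ 2 := by
  rw [← mul_prod_erase s _ hi, ← prod_pow]
  congr 1
  refine prod_congr rfl fun j hj => ?_
  rw [← pow_mul, Nat.div_mul_cancel (heven j (mem_erase.mp hj).2 (mem_erase.mp hj).1).two_dvd]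

theorem Prime.not_dvd_prod_pow_of_forall_not_associated {ι M : Type*} [CommMonoidWithZero M]
    [IsCancelMulZero M] {p : M} (hp : Prime p) {s : Finset ι} {f : ι → M} (e : ι → ℕ) (hf : ∀ j ∈ s, Prime (f j))
    (hs : ∀ j ∈ s, ¬ Associated p (f j)) : ¬ p ∣ ∏ j ∈ s, f j ^ e j :=
  hp.not_dvd_finsetProd fun j hj h =>
    hs j hj (hp.associated_of_dvd (hf j hj) (hp.dvd_of_dvd_pow h))

theorem odd_norm_perfect_form_general (α : GaussianInt) (n : ℕ)
    (ε : GaussianInt) (hε : IsUnit ε)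
    (π : ℕ → GaussianInt) (k : ℕ → ℕ)
    (hprime : ∀ i ∈ Finset.range n, Prime (π i))
    (hassoc : ∀ i ∈ Finset.range n, ∀ j ∈ Finset.range n, i ≠ j →
      ¬ Associated (π i) (π j))
    (hfact : α = ε * ∏ i ∈ Finset.range n, π i ^ k i)
    (hodd : ¬ (⟨1, 1⟩ : GaussianInt) ∣ α)
    (hnormperfect :
      Zsqrtd.norm (∏ i ∈ Finset.range n, ∑ j ∈ Finset.range (k i + 1), π i ^ j) =
        2 * Zsqrtd.norm α) :
    ∃ (p γ : GaussianInt) (m : ℕ), Prime p ∧ Odd m ∧ 0 < m ∧ ¬ p ∣ γ ∧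
      α = p ^ m * γ ^ 2 := by
  classical
  have hodd_pow : ∀ i ∈ range n, ¬ (⟨1, 1⟩ : GaussianInt) ∣ π i ^ k i := fun i hi h =>
    hodd (hfact ▸ (h.trans (dvd_prod_of_mem (fun i => π i ^ k i) hi)).mul_left ε)
  have hnorm : ∏ i ∈ range n, (∑ j ∈ range (k i + 1), π i ^ j).norm = 2 * α.norm :=
    (map_prod Zsqrtd.normMonoidHom _ _).symm.trans hnormperfect
  have hαnorm : ¬ 2 ∣ α.norm := (GaussianInt.one_one_dvd_iff_two_dvd_norm α).not.mp hodd
  have hsq : ¬ 2 ^ 2 ∣ ∏ i ∈ range n, (∑ j ∈ range (k i + 1), π i ^ j).norm := by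
    rw [hnorm, sq]
    exact mt (Int.dvd_of_mul_dvd_mul_left two_ne_zero) hαnorm
  obtain ⟨i, hi, hi_dvd, huniq⟩ :=
    Int.prime_two.exists_dvd_forall_dvd_eq_of_not_sq_dvd_prod (hnorm ▸ dvd_mul_right 2 _) hsq
  have hk : Odd (k i) := (GaussianInt.two_dvd_norm_geom_sum_iff (hodd_pow i hi)).mp hi_dvd
  have heven : ∀ j ∈ range n, j ≠ i → Even (k j) := fun j hj hji => Nat.not_odd_iff_even.mp
    fun hkj => hji (huniq j hj ((GaussianInt.two_dvd_norm_geom_sum_iff (hodd_pow j hj)).mpr hkj))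
  have hp : Prime (ε ^ k i * π i) :=
    (associated_unit_mul_left (π i) _ (hε.pow _)).symm.prime (hprime i hi)
  refine ⟨ε ^ k i * π i, ∏ j ∈ (range n).erase i, π j ^ (k j / 2), k i, hp, hk, hk.pos, ?_, ?_⟩
  · exact fun h => (hprime i hi).not_dvd_prod_pow_of_forall_not_associated _
      (fun j hj => hprime j (mem_of_mem_erase hj))
      (fun j hj => hassoc i hi j (mem_of_mem_erase hj) (ne_of_mem_erase hj).symm)
      ((dvd_mul_left _ _).trans h)
  · have hε8 : ε ^ 8 = 1 := by
      rw [show 8 = 4 * 2 by rfl, pow_mul, GaussianInt.pow_four_eq_one_of_isUnit hε, one_pow]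
    rw [hfact, prod_pow_eq_pow_mul_sq hi heven, mul_pow, pow_pow_self_of_odd hε8 hk]
    ring

/-- Euler-style form of odd norm-perfect Gaussian integers.
`α` has prime factorization `ε * ∏ πᵢ ^ kᵢ` with `ε` a unit and the `πᵢ`
pairwise non-associate Gaussian primes; `σ(α) = ∏ σ(πᵢ^{kᵢ})` where
`σ(π^k) = 1 + π + ⋯ + π^k`, and norm-perfect means `N(σ(α)) = 2 N(α)`. -/
theorem odd_norm_perfect_form (α : GaussianInt) (n : ℕ)
    (ε : GaussianInt) (hε : IsUnit ε)
    (π : ℕ → GaussianInt) (k : ℕ → ℕ)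
    (hprime : ∀ i ∈ Finset.range n, Prime (π i))
    (hpos : ∀ i ∈ Finset.range n, 0 < k i)
    (hassoc : ∀ i ∈ Finset.range n, ∀ j ∈ Finset.range n, i ≠ j →
      ¬ Associated (π i) (π j))
    (hfact : α = ε * ∏ i ∈ Finset.range n, π i ^ k i)
    (hodd : ¬ (⟨1, 1⟩ : GaussianInt) ∣ α)
    (hnormperfect :
      Zsqrtd.norm (∏ i ∈ Finset.range n, ∑ j ∈ Finset.range (k i + 1), π i ^ j) =
        2 * Zsqrtd.norm α) :
    ∃ (p γ : GaussianInt) (m : ℕ), Prime p ∧ Odd m ∧ 0 < m ∧ ¬ p ∣ γ ∧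
      α = p ^ m * γ ^ 2 :=
  odd_norm_perfect_form_general α n ε hε π k hprime hassoc hfact hodd hnormperfect
end

section
/- If α is an odd norm-perfect Gaussian integer with prime factorization α = ε·∏_{i=1}^{n} π_i^{k_i}, then N(σ(α)) ≡ 2 (mod 4), and exactly one index i satisfies N(σ(π_i^{k_i})) ≡ 2 (mod 4) while for all other indices N(σ(π_j^{k_j})) ≡ 1 (mod 4). -/
/-!
Since `1 + i ∤ α`, the norm `N(α)` is odd, so `N(σ(α)) = 2 N(α) ≡ 2 (mod 4)`. By multiplicativity of
the norm, `N(σ(α))` is the product of the integers `N(σ(πᵢ^kᵢ))`; a product equal to twice an odd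
number has exactly one even factor, that factor is twice an odd number, and the remaining factors
are odd. An odd norm `a² + b²` is `≡ 1 (mod 4)`.
-/

namespace Int

theorem two_mul_modEq_two_of_odd {m : ℤ} (hm : Odd m) : 2 * m ≡ 2 [ZMOD 4] := by
  obtain ⟨w, rfl⟩ := hm
  exact (Int.modEq_iff_dvd.2 ⟨w, by ring⟩).symm

theorem odd_of_mem_of_odd_prod {ι : Type*} {s : Finset ι} {f : ι → ℤ} {j : ι} (hj : j ∈ s)
    (hodd : Odd (∏ i ∈ s, f i)) : Odd (f j) := by
  rw [← Int.not_even_iff_odd, even_iff_two_dvd] at hodd ⊢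
  exact fun h2 => hodd (h2.trans (Finset.dvd_prod_of_mem f hj))

theorem exists_modEq_two_of_prod_eq_two_mul_odd {ι : Type*} [DecidableEq ι] {s : Finset ι}
    {f : ι → ℤ} {m : ℤ} (hprod : ∏ i ∈ s, f i = 2 * m) (hm : Odd m) :
    ∃ i ∈ s, f i ≡ 2 [ZMOD 4] ∧ ∀ j ∈ s, j ≠ i → Odd (f j) := by
  obtain ⟨i, hi, ⟨u, hu⟩⟩ :=
    (Int.prime_two.dvd_finsetProd_iff f).1 (Dvd.intro m hprod.symm)
  have hrest : u * ∏ j ∈ s.erase i, f j = m := by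
    apply mul_left_cancel₀ (two_ne_zero' ℤ)
    rw [← hprod, ← Finset.mul_prod_erase s f hi, hu, mul_assoc]
  rw [← hrest, Int.odd_mul] at hm
  refine ⟨i, hi, hu ▸ two_mul_modEq_two_of_odd hm.1, fun j hj hji => ?_⟩
  exact odd_of_mem_of_odd_prod (Finset.mem_erase.2 ⟨hji, hj⟩) hm.2

end Int

theorem Zsqrtd.norm_prod {d : ℤ} {ι : Type*} (s : Finset ι) (f : ι → ℤ√d) :
    (∏ i ∈ s, f i).norm = ∏ i ∈ s, (f i).norm :=
  map_prod Zsqrtd.normMonoidHom f s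

namespace GaussianInt

theorem norm_eq_re_sq_add_im_sq (z : GaussianInt) : z.norm = z.re ^ 2 + z.im ^ 2 := by
  rw [Zsqrtd.norm_def]; ring

theorem norm_modEq_one_of_odd {z : GaussianInt} (hz : Odd z.norm) : z.norm ≡ 1 [ZMOD 4] := by
  rw [norm_eq_re_sq_add_im_sq] at hz ⊢
  rcases Int.even_or_odd z.re with ⟨a, ha⟩ | ⟨a, ha⟩ <;>
    rcases Int.even_or_odd z.im with ⟨b, hb⟩ | ⟨b, hb⟩ <;>
    rw [ha, hb] at hz ⊢
  · exact absurd hz (Int.not_odd_iff_even.2 ⟨2 * a ^ 2 + 2 * b ^ 2, by ring⟩)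
  · exact (Int.modEq_iff_dvd.2 ⟨a ^ 2 + b ^ 2 + b, by ring⟩).symm
  · exact (Int.modEq_iff_dvd.2 ⟨a ^ 2 + a + b ^ 2, by ring⟩).symm
  · exact absurd hz
      (Int.not_odd_iff_even.2 ⟨2 * a ^ 2 + 2 * a + 2 * b ^ 2 + 2 * b + 1, by ring⟩)

/-- `2 ∣ N(z)` forces `re z ≡ im z (mod 2)`, and then
`z = (1 + i) · ((re + im) / 2 + (im - re) / 2 · i)`. -/
theorem odd_norm_of_not_one_add_I_dvd {z : GaussianInt} (hz : ¬ (⟨1, 1⟩ : GaussianInt) ∣ z) :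
    Odd z.norm := by
  rw [← Int.not_even_iff_odd]
  intro heven
  apply hz
  have hsum : Even (z.re + z.im) := by
    rw [norm_eq_re_sq_add_im_sq] at heven
    simpa [parity_simps] using heven
  obtain ⟨t, ht⟩ := hsum
  refine ⟨⟨t, t - z.re⟩, ?_⟩
  ext <;> simp only [Zsqrtd.re_mul, Zsqrtd.im_mul] <;> omega

end GaussianInt

theorem odd_norm_perfect_factor_norms_general (α : GaussianInt) (n : ℕ)
    (π : ℕ → GaussianInt) (k : ℕ → ℕ)
    (hodd : ¬ (⟨1, 1⟩ : GaussianInt) ∣ α)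
    (hnormperfect :
      Zsqrtd.norm (∏ i ∈ Finset.range n, ∑ j ∈ Finset.range (k i + 1), π i ^ j) =
        2 * Zsqrtd.norm α) :
    Zsqrtd.norm (∏ i ∈ Finset.range n, ∑ j ∈ Finset.range (k i + 1), π i ^ j)
        ≡ 2 [ZMOD 4] ∧
    ∃ i ∈ Finset.range n,
      Zsqrtd.norm (∑ j ∈ Finset.range (k i + 1), π i ^ j) ≡ 2 [ZMOD 4] ∧
      ∀ j ∈ Finset.range n, j ≠ i →
        Zsqrtd.norm (∑ l ∈ Finset.range (k j + 1), π j ^ l) ≡ 1 [ZMOD 4] := by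
  have hαodd := GaussianInt.odd_norm_of_not_one_add_I_dvd hodd
  refine ⟨hnormperfect ▸ Int.two_mul_modEq_two_of_odd hαodd, ?_⟩
  rw [Zsqrtd.norm_prod] at hnormperfect
  obtain ⟨i, hi, hi2, hothers⟩ := Int.exists_modEq_two_of_prod_eq_two_mul_odd hnormperfect hαodd
  exact ⟨i, hi, hi2, fun j hj hji => GaussianInt.norm_modEq_one_of_odd (hothers j hj hji)⟩

/-- For an odd norm-perfect Gaussian integer `α = ε ∏ πᵢ^{kᵢ}`,
`N(σ(α)) ≡ 2 (mod 4)` and exactly one factor has `N(σ(πᵢ^{kᵢ})) ≡ 2 (mod 4)`,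
the others being `≡ 1 (mod 4)`. -/
theorem odd_norm_perfect_factor_norms (α : GaussianInt) (n : ℕ)
    (ε : GaussianInt) (hε : IsUnit ε)
    (π : ℕ → GaussianInt) (k : ℕ → ℕ)
    (hprime : ∀ i ∈ Finset.range n, Prime (π i))
    (hpos : ∀ i ∈ Finset.range n, 0 < k i)
    (hassoc : ∀ i ∈ Finset.range n, ∀ j ∈ Finset.range n, i ≠ j →
      ¬ Associated (π i) (π j))
    (hfact : α = ε * ∏ i ∈ Finset.range n, π i ^ k i)
    (hodd : ¬ (⟨1, 1⟩ : GaussianInt) ∣ α)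
    (hnormperfect :
      Zsqrtd.norm (∏ i ∈ Finset.range n, ∑ j ∈ Finset.range (k i + 1), π i ^ j) =
        2 * Zsqrtd.norm α) :
    Zsqrtd.norm (∏ i ∈ Finset.range n, ∑ j ∈ Finset.range (k i + 1), π i ^ j)
        ≡ 2 [ZMOD 4] ∧
    ∃ i ∈ Finset.range n,
      Zsqrtd.norm (∑ j ∈ Finset.range (k i + 1), π i ^ j) ≡ 2 [ZMOD 4] ∧
      ∀ j ∈ Finset.range n, j ≠ i →
        Zsqrtd.norm (∑ l ∈ Finset.range (k j + 1), π j ^ l) ≡ 1 [ZMOD 4] :=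
  odd_norm_perfect_factor_norms_general α n π k hodd hnormperfect
end
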